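/- arXiv:2306.12640 — 4 statements merged into one kernel-verified Lean document; each statement's English description precedes it below -/
import Mathlib

section
/- If x and y are n-dimensional random vectors sampled independently from a continuous distribution (absolutely continuous with respect to Lebesgue measure on R^{2n}), and Tanh is applied entrywise to the n×2 matrix [x, y], then with probability 1 the rank of Tanh([x,y]) equals the rank of [x,y]. -/
open MeasureTheory Function

/-! Only three properties of `tanh` matter: it is measurable, injective, and fixes `0`.
With at most one row, a matrix and its entrywise image vanish together, so their ranks (at most
one) agree. With two distinct rows `i, j`, the minors `x_i y_j - x_j y_i` and
`f(x_i) f(y_j) - f(x_j) f(y_i)` vanish only on Lebesgue-null sets: for almost every `x` we have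
`f(x_j) ≠ 0`, and then injectivity of `f` leaves at most one admissible value of `y_i` once the
other coordinates are fixed. So both matrices have rank two almost everywhere, and absolute
continuity of the law of `(x, y)` transfers this to `μ`. -/

theorem Real.continuous_tanh : Continuous Real.tanh := by
  simp only [funext Real.tanh_eq_sinh_div_cosh]
  exact Real.continuous_sinh.div Real.continuous_cosh fun x => (Real.cosh_pos x).ne'

namespace Matrix

variable {m n K : Type*} [Fintype n] [Field K]

theorem rank_eq_zero_iff {M : Matrix m n K} : M.rank = 0 ↔ M = 0 := by
  classical
  rw [rank, Submodule.finrank_eq_zero, LinearMap.range_eq_bot, ← toLin'_apply',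
    LinearEquiv.map_eq_zero_iff]

theorem rank_eq_one_of_subsingleton [Fintype m] [Subsingleton m] {M : Matrix m n K}
    (hM : M ≠ 0) : M.rank = 1 :=
  le_antisymm (M.rank_le_card_height.trans (Fintype.card_le_one_iff_subsingleton.mpr ‹_›))
    (Nat.one_le_iff_ne_zero.mpr (rank_eq_zero_iff.not.mpr hM))

theorem rank_map_eq_of_subsingleton [Fintype m] [Subsingleton m] (M : Matrix m n K)
    {f : K → K} (hf : Injective f) (hf0 : f 0 = 0) : (M.map f).rank = M.rank := by
  rcases eq_or_ne M 0 with rfl | hM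
  · rw [Matrix.map_zero f hf0]
  have hfM : M.map f ≠ 0 := fun h => hM <| ext fun a b =>
    hf <| (congr_fun₂ h a b).trans hf0.symm
  rw [rank_eq_one_of_subsingleton hM, rank_eq_one_of_subsingleton hfM]

theorem rank_eq_card_width_of_det_submatrix_ne_zero [DecidableEq n] (M : Matrix m n K)
    (e : n → m) (he : (M.submatrix e id).det ≠ 0) : M.rank = Fintype.card n :=
  le_antisymm M.rank_le_card_width <| by
    rw [← rank_of_isUnit _ ((isUnit_iff_isUnit_det _).mpr he.isUnit)]
    exact M.rank_submatrix_le e id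

theorem rank_eq_two_of_mul_ne_mul (M : Matrix m (Fin 2) K) {i j : m}
    (h : M i 0 * M j 1 ≠ M j 0 * M i 1) : M.rank = 2 := by
  refine M.rank_eq_card_width_of_det_submatrix_ne_zero ![i, j] ?_
  rw [det_fin_two]
  simpa [sub_eq_zero, mul_comm (M i 1)] using h

end Matrix

namespace MeasureTheory.Measure

variable {ι : Type*} [Fintype ι] [DecidableEq ι] {α : ι → Type*}
  [∀ i, MeasurableSpace (α i)] {μ : ∀ i, Measure (α i)} [∀ i, SigmaFinite (μ i)]

theorem ae_pi_of_forall_ae_update (i : ι) {p : (∀ i, α i) → Prop}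
    (hp : MeasurableSet {x | p x}) (h : ∀ x, ∀ᵐ t ∂μ i, p (update x i t)) :
    ∀ᵐ x ∂Measure.pi μ, p x := by
  set s := {x | ¬ p x}
  have hs : MeasurableSet s := hp.compl
  refine ae_iff.mpr (show Measure.pi μ s = 0 from ?_)
  rcases s.eq_empty_or_nonempty with hempty | ⟨x₀, -⟩
  · rw [hempty, measure_empty]
  have hslice : (fun x => ∫⁻ t, s.indicator 1 (update x i t) ∂μ i) = 0 := by
    ext x
    refine lintegral_eq_zero_of_ae_eq_zero ((h x).mono fun t ht => ?_)
    exact Set.indicator_of_notMem (not_not_intro ht) _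
  rw [← lintegral_indicator_one hs, lintegral_eq_lmarginal_univ x₀,
    ← Finset.insert_erase (Finset.mem_univ i),
    lmarginal_insert' _ (measurable_one.indicator hs) (Finset.notMem_erase i _), hslice]
  simp [lmarginal]

end MeasureTheory.Measure

section

variable {ι : Type*} [Fintype ι] {f : ℝ → ℝ}

theorem ae_comp_eval_ne (hf : Injective f) (j : ι) (c : ℝ) :
    ∀ᵐ a : ι → ℝ, f (a j) ≠ c := by
  have hc : ∀ᵐ t : ℝ, f t ≠ c := ae_iff.mpr <| by
    simpa using Set.Subsingleton.measure_zero (s := {t | f t = c})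
      (fun s hs t ht => hf (hs.trans ht.symm)) volume
  rw [volume_pi]
  exact (Measure.tendsto_eval_ae_ae (μ := fun _ : ι => (volume : Measure ℝ))).eventually hc

theorem ae_mul_comp_eval_ne [DecidableEq ι] (hfm : Measurable f) (hf : Injective f) {i j : ι}
    (hij : i ≠ j) :
    ∀ᵐ p : (ι → ℝ) × (ι → ℝ), f (p.1 i) * f (p.2 j) ≠ f (p.1 j) * f (p.2 i) := by
  rw [Measure.volume_eq_prod, Measure.ae_prod_iff_ae_ae (by measurability)]
  filter_upwards [ae_comp_eval_ne hf j 0] with a ha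
  rw [volume_pi]
  refine Measure.ae_pi_of_forall_ae_update i (by measurability) fun b => ae_iff.mpr ?_
  refine Set.Subsingleton.measure_zero (fun s hs t ht => hf (mul_left_cancel₀ ha ?_)) volume
  simp only [Set.mem_ofPred_eq, not_not, update_self, update_of_ne hij.symm] at hs ht
  exact hs.symm.trans ht

theorem ae_rank_map_eq_rank [DecidableEq ι] (hfm : Measurable f) (hf : Injective f)
    (hf0 : f 0 = 0) :
    ∀ᵐ p : (ι → ℝ) × (ι → ℝ),
      ((Matrix.of fun i (j : Fin 2) => ![p.1, p.2] j i).map f).rank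
        = (Matrix.of fun i (j : Fin 2) => ![p.1, p.2] j i).rank := by
  rcases subsingleton_or_nontrivial ι with hι | hι
  · exact ae_of_all _ fun p => Matrix.rank_map_eq_of_subsingleton _ hf hf0
  obtain ⟨i, j, hij⟩ := exists_pair_ne ι
  filter_upwards [ae_mul_comp_eval_ne hfm hf hij,
    ae_mul_comp_eval_ne measurable_id injective_id hij] with p hfp hp
  rw [Matrix.rank_eq_two_of_mul_ne_mul _ hfp, Matrix.rank_eq_two_of_mul_ne_mul _ hp]

end

theorem stmt0_general {n : ℕ} {Ω : Type*} [MeasurableSpace Ω] (μ : Measure Ω)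
    (x y : Ω → (Fin n → ℝ))
    (hmeas : Measurable fun ω => (x ω, y ω))
    (habs : μ.map (fun ω => (x ω, y ω)) ≪
      (volume : Measure ((Fin n → ℝ) × (Fin n → ℝ)))) :
    ∀ᵐ ω ∂μ,
      ((Matrix.of fun i (j : Fin 2) => ![x ω, y ω] j i).map Real.tanh).rank
        = (Matrix.of fun i (j : Fin 2) => ![x ω, y ω] j i).rank :=
  ae_of_ae_map hmeas.aemeasurable <| habs.ae_le <|
    ae_rank_map_eq_rank Real.continuous_tanh.measurable Real.tanh_injective Real.tanh_zero

/-- If `x` and `y` are `n`-dimensional random vectors whose joint law is absolutely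
continuous with respect to Lebesgue measure on `ℝ^{2n}`, then applying `tanh`
entrywise to the `n × 2` matrix `[x, y]` almost surely preserves its rank. -/
theorem stmt0 {n : ℕ} {Ω : Type*} [MeasurableSpace Ω] (μ : Measure Ω)
    [IsProbabilityMeasure μ] (x y : Ω → (Fin n → ℝ))
    (hmeas : Measurable fun ω => (x ω, y ω))
    (habs : μ.map (fun ω => (x ω, y ω)) ≪
      (volume : Measure ((Fin n → ℝ) × (Fin n → ℝ)))) :
    ∀ᵐ ω ∂μ,
      ((Matrix.of fun i (j : Fin 2) => ![x ω, y ω] j i).map Real.tanh).rank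
        = (Matrix.of fun i (j : Fin 2) => ![x ω, y ω] j i).rank :=
  stmt0_general μ x y hmeas habs
end

section
/- For n ≥ 2, the vectors (x_1,...,x_n) and (tanh(x_1),...,tanh(x_n)) are linearly dependent over R only on a Lebesgue-null subset of R^n. -/
open MeasureTheory

private lemma tanh_hasDerivAt (x : ℝ) :
    HasDerivAt Real.tanh (1 / Real.cosh x ^ 2) x := by
  have h := (Real.hasDerivAt_sinh x).div (Real.hasDerivAt_cosh x) (Real.cosh_pos x).ne'
  have heq : (Real.cosh x * Real.cosh x - Real.sinh x * Real.sinh x) / Real.cosh x ^ 2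
      = 1 / Real.cosh x ^ 2 := by
    rw [show Real.cosh x * Real.cosh x - Real.sinh x * Real.sinh x
        = Real.cosh x ^ 2 - Real.sinh x ^ 2 by ring, Real.cosh_sq_sub_sinh_sq]
  rw [heq] at h
  exact h.congr_of_eventuallyEq (by filter_upwards with t using (Real.tanh_eq_sinh_div_cosh t))

private lemma ratio_strictAnti : StrictAntiOn (fun t : ℝ => Real.tanh t / t) (Set.Ioi 0) := by
  have key : ∀ t ∈ interior (Set.Ioi (0:ℝ)),
      deriv (fun t : ℝ => Real.tanh t / t) t < 0 := by
    intro t ht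
    rw [interior_Ioi] at ht
    have ht0 : (0:ℝ) < t := ht
    have hd : HasDerivAt (fun t : ℝ => Real.tanh t / t)
        ((1 / Real.cosh t ^ 2 * t - Real.tanh t * 1) / t ^ 2) t :=
      (tanh_hasDerivAt t).div (hasDerivAt_id t) ht0.ne'
    rw [hd.deriv]
    apply div_neg_of_neg_of_pos _ (by positivity)
    have hc := Real.cosh_pos t
    have hs : t < Real.sinh t := Real.self_lt_sinh_iff.2 ht0
    have h1 : Real.sinh t ≤ Real.sinh t * Real.cosh t :=
      le_mul_of_one_le_right (by linarith) (Real.one_le_cosh t)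
    have h2 : 1 / Real.cosh t ^ 2 * t < Real.tanh t := by
      rw [Real.tanh_eq_sinh_div_cosh, div_mul_eq_mul_div, one_mul,
        div_lt_div_iff₀ (by positivity) hc]
      nlinarith
    linarith
  apply strictAntiOn_of_deriv_neg (convex_Ioi 0) _ key
  exact ContinuousOn.div (fun t _ => (tanh_hasDerivAt t).continuousAt.continuousWithinAt)
    continuousOn_id (fun t ht => ne_of_gt ht)

private lemma tanh_cross {x y : ℝ} (h : x * Real.tanh y = y * Real.tanh x) :
    x = y ∨ x = -y ∨ x = 0 ∨ y = 0 := by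
  by_cases hx : x = 0
  · tauto
  by_cases hy : y = 0
  · tauto
  have e : ∀ t : ℝ, t ≠ 0 → Real.tanh |t| / |t| = Real.tanh t / t := by
    intro t ht
    rcases abs_choice t with h | h <;> rw [h]
    rw [Real.tanh_neg, neg_div_neg_eq]
  have heq : Real.tanh |x| / |x| = Real.tanh |y| / |y| := by
    rw [e x hx, e y hy, div_eq_div_iff hx hy]
    linarith
  have habs : |x| = |y| :=
    ratio_strictAnti.injOn (abs_pos.2 hx) (abs_pos.2 hy) heq
  rcases abs_eq_abs.1 habs with h | h <;> tauto

/-- For `n ≥ 2`, the set of `v ∈ ℝ^n` such that `(v_1, …, v_n)` and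
`(tanh v_1, …, tanh v_n)` are linearly dependent over `ℝ` is Lebesgue-null. -/
theorem stmt1 (n : ℕ) (hn : 2 ≤ n) :
    (volume : Measure (Fin n → ℝ))
      {v | ∃ a b : ℝ, (a, b) ≠ (0, 0) ∧ ∀ i, a * v i + b * Real.tanh (v i) = 0} = 0 := by
  set i0 : Fin n := ⟨0, by omega⟩
  set i1 : Fin n := ⟨1, by omega⟩
  have hi : i0 ≠ i1 := by simp [i0, i1, Fin.ext_iff]
  set P0 : (Fin n → ℝ) →ₗ[ℝ] ℝ := LinearMap.proj i0
  set P1 : (Fin n → ℝ) →ₗ[ℝ] ℝ := LinearMap.proj i1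
  have hnull : ∀ L : (Fin n → ℝ) →ₗ[ℝ] ℝ, ∀ w, L w ≠ 0 →
      (volume : Measure (Fin n → ℝ)) {v | L v = 0} = 0 := by
    intro L w hw
    have hne : LinearMap.ker L ≠ ⊤ := by
      intro h
      exact hw (LinearMap.mem_ker.1 (h ▸ Submodule.mem_top : w ∈ LinearMap.ker L))
    exact Measure.addHaar_submodule volume (LinearMap.ker L) hne
  have hsingle0 : (P0 - P1) (Pi.single i0 1) ≠ 0 := by
    simp [P0, P1, Pi.single_eq_same, Pi.single_eq_of_ne hi.symm]
  have hsingle1 : (P0 + P1) (Pi.single i0 1) ≠ 0 := by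
    simp [P0, P1, Pi.single_eq_same, Pi.single_eq_of_ne hi.symm]
  have hsingle2 : P0 (Pi.single i0 1) ≠ 0 := by simp [P0, Pi.single_eq_same]
  have hsingle3 : P1 (Pi.single i1 1) ≠ 0 := by simp [P1, Pi.single_eq_same]
  apply measure_mono_null (t := {v | (P0 - P1) v = 0} ∪ {v | (P0 + P1) v = 0}
      ∪ {v | P0 v = 0} ∪ {v | P1 v = 0})
  · rintro v ⟨a, b, hab, h⟩
    have h0 := h i0
    have h1 := h i1
    have hxy : v i0 * Real.tanh (v i1) = v i1 * Real.tanh (v i0) := by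
      by_contra hne
      apply hab
      have hne' : v i0 * Real.tanh (v i1) - v i1 * Real.tanh (v i0) ≠ 0 := sub_ne_zero.2 hne
      have ha : a * (v i0 * Real.tanh (v i1) - v i1 * Real.tanh (v i0)) = 0 := by
        linear_combination Real.tanh (v i1) * h0 - Real.tanh (v i0) * h1
      have hb : b * (v i0 * Real.tanh (v i1) - v i1 * Real.tanh (v i0)) = 0 := by
        linear_combination v i0 * h1 - v i1 * h0
      rw [Prod.mk.injEq]
      exact ⟨(mul_eq_zero.1 ha).resolve_right hne', (mul_eq_zero.1 hb).resolve_right hne'⟩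
    rcases tanh_cross hxy with h | h | h | h
    · left; left; left
      simp only [Set.mem_setOf_eq, LinearMap.sub_apply, P0, P1, LinearMap.proj_apply]
      rw [h]; ring
    · left; left; right
      simp only [Set.mem_setOf_eq, LinearMap.add_apply, P0, P1, LinearMap.proj_apply]
      rw [h]; ring
    · left; right
      simpa [P0] using h
    · right
      simpa [P1] using h
  · refine measure_union_null (measure_union_null (measure_union_null ?_ ?_) ?_) ?_
    · exact hnull _ _ hsingle0
    · exact hnull _ _ hsingle1
    · exact hnull _ _ hsingle2
    · exact hnull _ _ hsingle3
end

section
/- Suppose a finite simple undirected graph G has k connected components and no bipartite components. Let Â = (D+I)^{-1/2}(A+I)(D+I)^{-1/2}, let X be any N×F nonnegative matrix, and let W_0, W_1, ... be entrywise nonnegative matrices with spectral norm at most 1. Define Y'_n = Â·ReLU(···Â·ReLU(Â X W_0) W_1···) W_n. Then limsup_{n→∞} rank(Y'_n) ≤ k. -/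
/-- `Y'_0 = Â X W_0`, `Y'_{n+1} = Â · ReLU(Y'_n) · W_{n+1}`, i.e.
`Y'_n = Â ReLU(⋯ Â ReLU(Â X W_0) W_1 ⋯) W_n`. -/
def deepGCNOutput {N F : ℕ} (Ahat : Matrix (Fin N) (Fin N) ℝ)
    (X : Matrix (Fin N) (Fin F) ℝ) (W : ℕ → Matrix (Fin F) (Fin F) ℝ) :
    ℕ → Matrix (Fin N) (Fin F) ℝ
  | 0 => Ahat * X * W 0
  | n + 1 => Ahat * (deepGCNOutput Ahat X W n).map (fun z => max z 0) * W (n + 1)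

/-!
Since `X`, the `W_j` and `Â` are entrywise nonnegative, every ReLU acts as the identity, so
`Y'_n = Â^{n+1} X W_0 ⋯ W_n`. The matrix `Â` is symmetric and similar to the row-stochastic
matrix `(D+I)⁻¹(A+I)`, whose diagonal is positive; by Gershgorin its spectrum lies in `(-1, 1]`,
so `Â^m` converges to a matrix `P` with `Â P = P`. Then `(I - Â) P = 0`, and
`I - Â = (D+I)^{-1/2} L (D+I)^{-1/2}` has the rank of the Laplacian `L`, which is `N - k`;
hence `rank P ≤ k`. Finally `X W_0 ⋯ W_n` stays entrywise bounded because the `W_j` are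
contractions, so `Y'_n - P X W_0 ⋯ W_n = (Â^{n+1} - P) X W_0 ⋯ W_n → 0`.
-/

open Matrix Filter Topology Set

theorem tendsto_pow_atTop_of_mem_Ioc {x : ℝ} (hx : x ∈ Ioc (-1) 1) :
    Tendsto (x ^ ·) atTop (𝓝 (if x = 1 then 1 else 0)) := by
  split_ifs with h
  · simp [h]
  · exact tendsto_pow_atTop_nhds_zero_of_abs_lt_one (abs_lt.2 ⟨hx.1, hx.2.lt_of_ne h⟩)

namespace Matrix

variable {l m n : Type*}

theorem IsHermitian.exists_tendsto_pow [Fintype n] [DecidableEq n] {A : Matrix n n ℝ}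
    (hA : A.IsHermitian) (h : spectrum ℝ A ⊆ Ioc (-1) 1) :
    ∃ P, Tendsto (A ^ ·) atTop (𝓝 P) := by
  set U : Matrix n n ℝ := (hA.eigenvectorUnitary : Matrix n n ℝ)
  have hpow (k : ℕ) : A ^ k = U * diagonal (fun i => hA.eigenvalues i ^ k) * star U := by
    conv_lhs => rw [hA.spectral_theorem]
    rw [← map_pow, diagonal_pow]
    rfl
  have hconj : Continuous fun D : Matrix n n ℝ => U * D * star U := by fun_prop
  simp only [hpow]
  exact ⟨_, (hconj.comp continuous_id.matrix_diagonal).continuousAt.tendsto.comp <|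
    tendsto_pi_nhds.2 fun i =>
      tendsto_pow_atTop_of_mem_Ioc (h (hA.eigenvalues_mem_spectrum_real i))⟩

theorem mul_eq_of_tendsto_pow [Fintype n] [DecidableEq n] {A P : Matrix n n ℝ}
    (h : Tendsto (A ^ ·) atTop (𝓝 P)) : A * P = P := by
  refine tendsto_nhds_unique ?_ ((tendsto_add_atTop_iff_nat 1).2 h)
  simpa only [pow_succ'] using h.const_mul A

theorem rank_add_rank_one_sub_le_of_tendsto_pow [Fintype n] [DecidableEq n] {A P : Matrix n n ℝ}
    (h : Tendsto (A ^ ·) atTop (𝓝 P)) : P.rank + (1 - A).rank ≤ Fintype.card n := by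
  rw [add_comm]
  exact rank_add_rank_le_card_of_mul_eq_zero <| by
    rw [sub_mul, one_mul, mul_eq_of_tendsto_pow h, sub_self]

theorem spectrum_subset_Ioc_of_mem_rowStochastic [Fintype n] [DecidableEq n] {P : Matrix n n ℝ}
    (hP : P ∈ rowStochastic ℝ n) (hdiag : ∀ i, 0 < P i i) :
    spectrum ℝ P ⊆ Ioc (-1) 1 := by
  intro μ hμ
  rw [← spectrum_toLin', ← Module.End.hasEigenvalue_iff_mem_spectrum] at hμ
  obtain ⟨i, hi⟩ := eigenvalue_mem_ball hμ
  rw [mem_rowStochastic_iff_sum] at hP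
  have hrow : ∑ j ∈ Finset.univ.erase i, ‖P i j‖ = 1 - P i i := by
    simp_rw [Real.norm_of_nonneg (hP.1 i _)]
    rw [Finset.sum_erase_eq_sub (Finset.mem_univ i), hP.2]
  rw [hrow, Metric.mem_closedBall, Real.dist_eq, abs_le] at hi
  constructor <;> linarith [hdiag i]

theorem abs_apply_le_of_norm_toEuclideanLin_le [Fintype m] [Fintype n] [DecidableEq n]
    {M : Matrix m n ℝ} {c : ℝ} (h : ∀ v, ‖toEuclideanLin M v‖ ≤ c * ‖v‖) (i : m) (j : n) :
    |M i j| ≤ c := by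
  have hcol : toEuclideanLin M (EuclideanSpace.single j 1) i = M i j := by
    simp [toLpLin_apply, mulVec_single]
  calc |M i j| = ‖toEuclideanLin M (EuclideanSpace.single j 1) i‖ := by
        rw [hcol, Real.norm_eq_abs]
    _ ≤ ‖toEuclideanLin M (EuclideanSpace.single j 1)‖ := PiLp.norm_apply_le _ i
    _ ≤ c := by simpa using h (EuclideanSpace.single j 1)

theorem tendsto_mul_nhds_zero_of_abs_apply_le [Fintype m] {α : Type*} {f : Filter α}
    {E : α → Matrix l m ℝ} {C : α → Matrix m n ℝ} (hE : Tendsto E f (𝓝 0)) {c : ℝ}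
    (hC : ∀ x i j, |C x i j| ≤ c) : Tendsto (fun x => E x * C x) f (𝓝 0) := by
  refine tendsto_pi_nhds.2 fun i => tendsto_pi_nhds.2 fun j => ?_
  have hterm (a : m) : Tendsto (fun x => E x i a * C x a j) f (𝓝 0) :=
    (tendsto_pi_nhds.1 (tendsto_pi_nhds.1 hE i) a).zero_mul_isBoundedUnder_le
      ⟨c, eventually_map.2 (Eventually.of_forall fun x => hC x a j)⟩
  simpa [mul_apply] using tendsto_finsetSum Finset.univ fun a _ => hterm a

theorem eventually_abs_apply_lt_of_tendsto_zero [Finite l] [Finite m] {α : Type*} {f : Filter α}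
    {E : α → Matrix l m ℝ} (hE : Tendsto E f (𝓝 0)) {ε : ℝ} (hε : 0 < ε) :
    ∀ᶠ x in f, ∀ i j, |E x i j| < ε := by
  refine eventually_all.2 fun i => eventually_all.2 fun j => ?_
  have hEij : Tendsto (fun x => E x i j) f (𝓝 0) :=
    tendsto_pi_nhds.1 (tendsto_pi_nhds.1 hE i) j
  simpa using hEij.abs.eventually (gt_mem_nhds (by simpa using hε))

theorem mul_apply_nonneg [Fintype m] {A : Matrix l m ℝ} {B : Matrix m n ℝ}
    (hA : ∀ i j, 0 ≤ A i j) (hB : ∀ i j, 0 ≤ B i j) (i : l) (k : n) : 0 ≤ (A * B) i k :=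
  Finset.sum_nonneg fun j _ => mul_nonneg (hA i j) (hB j k)

theorem norm_toEuclideanLin_listProd_le [Fintype n] [DecidableEq n] {L : List (Matrix n n ℝ)}
    (hL : ∀ M ∈ L, ∀ v, ‖toEuclideanLin M v‖ ≤ ‖v‖) (v : EuclideanSpace ℝ n) :
    ‖toEuclideanLin L.prod v‖ ≤ ‖v‖ := by
  induction L generalizing v with
  | nil => simp
  | cons M L ih =>
    rw [List.prod_cons, toLpLin_mul_same, LinearMap.comp_apply]
    exact (hL M List.mem_cons_self _).trans
      (ih (fun M' hM' => hL M' (List.mem_cons_of_mem _ hM')) v)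

theorem abs_mul_listProd_apply_le [Fintype m] [Fintype n] [DecidableEq n] (X : Matrix m n ℝ)
    {L : List (Matrix n n ℝ)} (hL : ∀ M ∈ L, ∀ v, ‖toEuclideanLin M v‖ ≤ ‖v‖)
    (i : m) (j : n) :
    |(X * L.prod) i j| ≤ ‖LinearMap.toContinuousLinearMap (toEuclideanLin X)‖ := by
  refine abs_apply_le_of_norm_toEuclideanLin_le (fun v => ?_) i j
  rw [toLpLin_mul_same, LinearMap.comp_apply]
  exact ((LinearMap.toContinuousLinearMap (toEuclideanLin X)).le_opNorm _).trans <|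
    mul_le_mul_of_nonneg_left (norm_toEuclideanLin_listProd_le hL v) (norm_nonneg _)

end Matrix

namespace SimpleGraph

variable {V : Type*} [Fintype V] [DecidableEq V] (G : SimpleGraph V) [DecidableRel G.Adj]

noncomputable section

def invSqrtAugDegMatrix : Matrix V V ℝ :=
  diagonal fun i => (√((G.degree i : ℝ) + 1))⁻¹

def augNormAdjMatrix : Matrix V V ℝ :=
  G.invSqrtAugDegMatrix * (G.adjMatrix ℝ + 1) * G.invSqrtAugDegMatrix

def augRandomWalkMatrix : Matrix V V ℝ :=
  (diagonal fun i => ((G.degree i : ℝ) + 1)⁻¹) * (G.adjMatrix ℝ + 1)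

lemma isUnit_invSqrtAugDegMatrix : IsUnit G.invSqrtAugDegMatrix :=
  isUnit_diagonal.2 <| Pi.isUnit_iff.2 fun i => by
    simpa using (Real.sqrt_pos.2 (by positivity)).ne'

lemma invSqrtAugDegMatrix_mul_self :
    G.invSqrtAugDegMatrix * G.invSqrtAugDegMatrix =
      diagonal fun i => ((G.degree i : ℝ) + 1)⁻¹ := by
  rw [invSqrtAugDegMatrix, diagonal_mul_diagonal]
  congr 1
  ext i
  rw [← mul_inv, Real.mul_self_sqrt (by positivity)]

lemma augNormAdjMatrix_nonneg (i j : V) : 0 ≤ G.augNormAdjMatrix i j := by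
  simp only [augNormAdjMatrix, invSqrtAugDegMatrix, diagonal_mul, mul_diagonal, Matrix.add_apply,
    adjMatrix_apply, one_apply]
  positivity

lemma isHermitian_augNormAdjMatrix : G.augNormAdjMatrix.IsHermitian := by
  rw [isHermitian_iff_isSymm, IsSymm, augNormAdjMatrix, invSqrtAugDegMatrix, transpose_mul,
    transpose_mul, diagonal_transpose, transpose_add, transpose_one, G.isSymm_adjMatrix.eq,
    Matrix.mul_assoc]

lemma one_sub_augNormAdjMatrix :
    1 - G.augNormAdjMatrix = G.invSqrtAugDegMatrix * G.lapMatrix ℝ * G.invSqrtAugDegMatrix := by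
  have hdeg : G.invSqrtAugDegMatrix * (G.degMatrix ℝ + 1) * G.invSqrtAugDegMatrix = 1 := by
    rw [invSqrtAugDegMatrix, degMatrix, ← diagonal_one, diagonal_add, diagonal_mul_diagonal,
      diagonal_mul_diagonal]
    congr 1
    ext i
    have : 0 < √((G.degree i : ℝ) + 1) := by positivity
    field_simp
    exact (Real.sq_sqrt (by positivity)).symm
  rw [lapMatrix, ← add_sub_add_right_eq_sub (G.degMatrix ℝ) _ 1, mul_sub, sub_mul, hdeg,
    augNormAdjMatrix]

lemma rank_one_sub_augNormAdjMatrix : (1 - G.augNormAdjMatrix).rank = (G.lapMatrix ℝ).rank := by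
  have hS := (isUnit_iff_isUnit_det _).1 G.isUnit_invSqrtAugDegMatrix
  rw [one_sub_augNormAdjMatrix, rank_mul_eq_left_of_isUnit_det _ _ hS,
    rank_mul_eq_right_of_isUnit_det _ _ hS]

lemma rank_lapMatrix_add_card_connectedComponent :
    (G.lapMatrix ℝ).rank + Fintype.card G.ConnectedComponent = Fintype.card V := by
  rw [card_connectedComponent_eq_finrank_ker_toLin'_lapMatrix, rank, ← toLin'_apply',
    LinearMap.finrank_range_add_finrank_ker, Module.finrank_fintype_fun_eq_card]

lemma augRandomWalkMatrix_mem_rowStochastic : G.augRandomWalkMatrix ∈ rowStochastic ℝ V := by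
  refine mem_rowStochastic.2 ⟨fun i j => ?_, ?_⟩
  · simp only [augRandomWalkMatrix, diagonal_mul, Matrix.add_apply, adjMatrix_apply, one_apply]
    positivity
  · ext i
    simp [augRandomWalkMatrix, ← mulVec_mulVec, add_mulVec, mulVec_diagonal, ← Function.const_one,
      inv_mul_cancel₀ (by positivity : (G.degree i : ℝ) + 1 ≠ 0)]

lemma spectrum_augNormAdjMatrix_subset : spectrum ℝ G.augNormAdjMatrix ⊆ Ioc (-1) 1 := by
  obtain ⟨u, hu⟩ := G.isUnit_invSqrtAugDegMatrix
  have hconj : (u : Matrix V V ℝ) * G.augNormAdjMatrix * ((u⁻¹ : (Matrix V V ℝ)ˣ) : Matrix V V ℝ) =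
      G.augRandomWalkMatrix := by
    rw [augNormAdjMatrix, augRandomWalkMatrix, ← G.invSqrtAugDegMatrix_mul_self, ← hu]
    simp only [Matrix.mul_assoc, Units.mul_inv, Matrix.mul_one]
  rw [← spectrum.units_conjugate (u := u), hconj]
  refine spectrum_subset_Ioc_of_mem_rowStochastic G.augRandomWalkMatrix_mem_rowStochastic
    fun i => ?_
  simp only [augRandomWalkMatrix, diagonal_mul, Matrix.add_apply, adjMatrix_apply, one_apply_eq]
  positivity

lemma rank_le_card_connectedComponent_of_tendsto_pow {P : Matrix V V ℝ}
    (h : Tendsto (G.augNormAdjMatrix ^ ·) atTop (𝓝 P)) :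
    P.rank ≤ Fintype.card G.ConnectedComponent := by
  have hP := rank_add_rank_one_sub_le_of_tendsto_pow h
  rw [rank_one_sub_augNormAdjMatrix] at hP
  have hL := G.rank_lapMatrix_add_card_connectedComponent
  omega

end

end SimpleGraph

section DeepGCN

variable {N F : ℕ} {Ahat : Matrix (Fin N) (Fin N) ℝ} {X : Matrix (Fin N) (Fin F) ℝ}
  {W : ℕ → Matrix (Fin F) (Fin F) ℝ}

theorem deepGCNOutput_nonneg (hA : ∀ i j, 0 ≤ Ahat i j) (hX : ∀ i j, 0 ≤ X i j)
    (hW : ∀ l i j, 0 ≤ W l i j) : ∀ n i j, 0 ≤ deepGCNOutput Ahat X W n i j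
  | 0 => mul_apply_nonneg (mul_apply_nonneg hA hX) (hW 0)
  | n + 1 => mul_apply_nonneg (mul_apply_nonneg hA fun _ _ => le_max_right _ _) (hW (n + 1))

theorem deepGCNOutput_eq_pow_mul (hA : ∀ i j, 0 ≤ Ahat i j) (hX : ∀ i j, 0 ≤ X i j)
    (hW : ∀ l i j, 0 ≤ W l i j) (n : ℕ) :
    deepGCNOutput Ahat X W n = Ahat ^ (n + 1) * (X * ((List.range (n + 1)).map W).prod) := by
  induction n with
  | zero => simp [deepGCNOutput, Matrix.mul_assoc]
  | succ n ih =>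
    have hrelu : (deepGCNOutput Ahat X W n).map (fun z => max z 0) = deepGCNOutput Ahat X W n :=
      ext fun i j => max_eq_left (deepGCNOutput_nonneg hA hX hW n i j)
    rw [deepGCNOutput, hrelu, ih, List.range_succ (n := n + 1), List.map_append, List.prod_append]
    simp [pow_succ', Matrix.mul_assoc]

end DeepGCN

theorem stmt13_general {N F : ℕ} (G : SimpleGraph (Fin N)) [DecidableRel G.Adj] (k : ℕ)
    (hk : Nat.card G.ConnectedComponent = k)
    (X : Matrix (Fin N) (Fin F) ℝ) (hX : ∀ i j, 0 ≤ X i j)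
    (W : ℕ → Matrix (Fin F) (Fin F) ℝ) (hWpos : ∀ l i j, 0 ≤ W l i j)
    (hWnorm : ∀ l (v : EuclideanSpace ℝ (Fin F)),
      ‖Matrix.toEuclideanLin (W l) v‖ ≤ ‖v‖) :
    let Dinvhalf : Matrix (Fin N) (Fin N) ℝ :=
      Matrix.diagonal fun i => (Real.sqrt ((G.degree i : ℝ) + 1))⁻¹
    let Ahat : Matrix (Fin N) (Fin N) ℝ :=
      Dinvhalf * (G.adjMatrix ℝ + 1) * Dinvhalf
    ∀ ε : ℝ, 0 < ε → ∃ n₀ : ℕ, ∀ n, n₀ ≤ n →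
      ∃ M : Matrix (Fin N) (Fin F) ℝ, M.rank ≤ k ∧
        ∀ i j, |deepGCNOutput Ahat X W n i j - M i j| < ε := by
  intro Dinvhalf Ahat ε hε
  obtain ⟨P, hP⟩ := IsHermitian.exists_tendsto_pow G.isHermitian_augNormAdjMatrix
    G.spectrum_augNormAdjMatrix_subset
  have hrank : P.rank ≤ k := by
    simpa [← hk, Nat.card_eq_fintype_card] using
      G.rank_le_card_connectedComponent_of_tendsto_pow hP
  set C : ℕ → Matrix (Fin N) (Fin F) ℝ := fun n => X * ((List.range (n + 1)).map W).prod
  have hC (n : ℕ) (i : Fin N) (j : Fin F) :=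
    abs_mul_listProd_apply_le X (L := (List.range (n + 1)).map W)
      (by simpa using fun l _ => hWnorm l) i j
  have hlim : Tendsto (fun n => (G.augNormAdjMatrix ^ (n + 1) - P) * C n) atTop (𝓝 0) :=
    tendsto_mul_nhds_zero_of_abs_apply_le
      (by simpa using ((tendsto_add_atTop_iff_nat 1).2 hP).sub_const P) hC
  obtain ⟨n₀, hn₀⟩ := eventually_atTop.1 (eventually_abs_apply_lt_of_tendsto_zero hlim hε)
  refine ⟨n₀, fun n hn => ⟨P * C n, (rank_mul_le_left _ _).trans hrank, fun i j => ?_⟩⟩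
  rw [deepGCNOutput_eq_pow_mul (Ahat := Ahat) G.augNormAdjMatrix_nonneg hX hWpos,
    ← Matrix.sub_apply, ← Matrix.sub_mul]
  exact hn₀ n hn i j

/-- Theorem 1: if a finite simple undirected graph `G` has `k` connected components
and no bipartite components, `Â = (D+I)^{-1/2}(A+I)(D+I)^{-1/2}`, `X ≥ 0` and the
`W_j ≥ 0` have spectral norm at most 1, then as `n → ∞` the output `Y'_n`
degenerates to rank at most `k`: it becomes arbitrarily close (entrywise) to
matrices of rank at most `k`. -/
theorem stmt13 {N F : ℕ} (G : SimpleGraph (Fin N)) [DecidableRel G.Adj] (k : ℕ)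
    (hk : Nat.card G.ConnectedComponent = k)
    (hnobip : ∀ c : G.ConnectedComponent,
      ¬ (G.induce {v | G.connectedComponentMk v = c}).Colorable 2)
    (X : Matrix (Fin N) (Fin F) ℝ) (hX : ∀ i j, 0 ≤ X i j)
    (W : ℕ → Matrix (Fin F) (Fin F) ℝ) (hWpos : ∀ l i j, 0 ≤ W l i j)
    (hWnorm : ∀ l (v : EuclideanSpace ℝ (Fin F)),
      ‖Matrix.toEuclideanLin (W l) v‖ ≤ ‖v‖) :
    let Dinvhalf : Matrix (Fin N) (Fin N) ℝ :=
      Matrix.diagonal fun i => (Real.sqrt ((G.degree i : ℝ) + 1))⁻¹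
    let Ahat : Matrix (Fin N) (Fin N) ℝ :=
      Dinvhalf * (G.adjMatrix ℝ + 1) * Dinvhalf
    ∀ ε : ℝ, 0 < ε → ∃ n₀ : ℕ, ∀ n, n₀ ≤ n →
      ∃ M : Matrix (Fin N) (Fin F) ℝ, M.rank ≤ k ∧
        ∀ i j, |deepGCNOutput Ahat X W n i j - M i j| < ε :=
  stmt13_general G k hk X hX W hWpos hWnorm
end

section
/- Let G be a complete bipartite graph with parts P (all label 1) and Q (all label 2), |P| = p, |Q| = q with p, q ≥ 1. Let Â_rw = (D+I)^{-1}(A+I) be the random walk renormalized affinity matrix. Then the post-aggregation similarity matrix S = (Â_rw Z)(Â_rw Z)^T satisfies: for every node v, the mean of S_{v,u} over nodes u with the same label as v is greater than or equal to the mean of S_{v,u} over nodes u with a different label. Hence the aggregation homophily H_agg(G) = 1 while the edge homophily H_edge(G) = 0. -/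
/-!
Every row of `Â_rw Z` depends only on the part of its node: it is `(1, q) / (q + 1)` on `P`
and `(p, 1) / (p + 1)` on `Q`. So `S` is constant on each of the four blocks, both means are
block values, and for a node of `P` the same-label mean exceeds the other by
`(q - 1)(pq - 1) / ((q + 1)²(p + 1)) ≥ 0` (symmetrically on `Q`). No edge of `K_{p,q}` joins
equal labels, whence `H_edge = 0`.
-/

open Finset Matrix

theorem Finset.sum_div_card_of_forall_eq {ι K : Type*} [Semifield K] [CharZero K]
    {s : Finset ι} {f : ι → K} {c : K} (hs : s.Nonempty) (hf : ∀ i ∈ s, f i = c) :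
    (∑ i ∈ s, f i) / #s = c := by
  rw [← expect_eq_sum_div_card, expect_congr rfl hf, expect_const hs]

theorem Matrix.diagonal_mul_add_one_mul_apply {n m R : Type*} [Fintype n] [DecidableEq n]
    [Semiring R] (d : n → R) (A : Matrix n n R) (Z : Matrix n m R) (v : n) :
    (diagonal d * (A + 1) * Z : Matrix n m R) v = d v • ((A * Z) v + Z v) := by
  ext j
  simp [Matrix.mul_assoc, Matrix.add_mul, diagonal_mul]

theorem add_div_mul_le_one_add_sq_div_sq {a b : ℝ} (ha : 1 ≤ a) (hb : 1 ≤ b) :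
    (a + b) / ((a + 1) * (b + 1)) ≤ (1 + a ^ 2) / (a + 1) ^ 2 := by
  rw [div_le_div_iff₀ (by positivity) (by positivity)]
  -- the difference of the two sides is `(a + 1) (a - 1) (a b - 1)`
  nlinarith [mul_nonneg (by linarith : (0 : ℝ) ≤ a + 1)
    (mul_nonneg (sub_nonneg.2 ha) (sub_nonneg.2 (one_le_mul_of_one_le_of_one_le ha hb)))]

namespace CompleteBipartite

variable (p q : ℕ)

abbrev Node := Fin p ⊕ Fin q

def adj : Matrix (Node p q) (Node p q) ℝ := fun u v => if u.isLeft ≠ v.isLeft then 1 else 0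

def degree : Node p q → ℝ := fun u => if u.isLeft then (q : ℝ) else (p : ℝ)

def labels : Matrix (Node p q) (Fin 2) ℝ :=
  fun u j => if (u.isLeft ∧ j = 0) ∨ (¬ u.isLeft ∧ j = 1) then 1 else 0

noncomputable def rwAffinity : Matrix (Node p q) (Node p q) ℝ :=
  diagonal (fun u => (degree p q u + 1)⁻¹) * (adj p q + 1)

noncomputable def similarity : Matrix (Node p q) (Node p q) ℝ :=
  (rwAffinity p q * labels p q) * (rwAffinity p q * labels p q)ᵀ

noncomputable def aggregatedRow : Bool → Fin 2 → ℝ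
  | true => ((q : ℝ) + 1)⁻¹ • ![1, (q : ℝ)]
  | false => ((p : ℝ) + 1)⁻¹ • ![(p : ℝ), 1]

theorem adj_mul_labels (v : Node p q) :
    (adj p q * labels p q) v = if v.isLeft then ![0, (q : ℝ)] else ![(p : ℝ), 0] := by
  ext j
  fin_cases j <;> rcases v with i | i <;> simp [adj, labels, mul_apply, Fintype.sum_sum_type]

theorem rwAffinity_mul_labels (v : Node p q) :
    (rwAffinity p q * labels p q) v = aggregatedRow p q v.isLeft := by
  rw [rwAffinity, diagonal_mul_add_one_mul_apply, adj_mul_labels]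
  ext j
  fin_cases j <;> rcases v with i | i <;>
    simp only [Pi.add_apply, Pi.smul_apply, labels] <;> simp [aggregatedRow, degree]

theorem similarity_apply (v u : Node p q) :
    similarity p q v u = aggregatedRow p q v.isLeft ⬝ᵥ aggregatedRow p q u.isLeft := by
  rw [← rwAffinity_mul_labels, ← rwAffinity_mul_labels]
  rfl

variable {p q}

theorem exists_isLeft_eq (hp : 1 ≤ p) (hq : 1 ≤ q) : ∀ b : Bool, ∃ u : Node p q, u.isLeft = b
  | true => ⟨.inl ⟨0, hp⟩, rfl⟩
  | false => ⟨.inr ⟨0, hq⟩, rfl⟩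

theorem mean_similarity_part (hp : 1 ≤ p) (hq : 1 ≤ q) (v : Node p q) (b : Bool) :
    (∑ u ∈ univ.filter (fun u : Node p q => u.isLeft = b), similarity p q v u) /
        #(univ.filter fun u : Node p q => u.isLeft = b) =
      aggregatedRow p q v.isLeft ⬝ᵥ aggregatedRow p q b := by
  obtain ⟨w, hw⟩ := exists_isLeft_eq hp hq b
  refine sum_div_card_of_forall_eq ⟨w, by simpa using hw⟩ fun u hu => ?_
  rw [similarity_apply, (mem_filter.1 hu).2]

theorem aggregatedRow_dotProduct_not_le (hp : 1 ≤ p) (hq : 1 ≤ q) (b : Bool) :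
    aggregatedRow p q b ⬝ᵥ aggregatedRow p q (!b) ≤
      aggregatedRow p q b ⬝ᵥ aggregatedRow p q b := by
  have hp' : (1 : ℝ) ≤ p := by exact_mod_cast hp
  have hq' : (1 : ℝ) ≤ q := by exact_mod_cast hq
  cases b
  · convert add_div_mul_le_one_add_sq_div_sq hp' hq' using 1
    · simp [aggregatedRow, dotProduct, Fin.sum_univ_two]
      field_simp
    · simp [aggregatedRow, dotProduct, Fin.sum_univ_two]
      field_simp
      ring
  · convert add_div_mul_le_one_add_sq_div_sq hq' hp' using 1
    · simp [aggregatedRow, dotProduct, Fin.sum_univ_two]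
      field_simp
      ring
    · simp [aggregatedRow, dotProduct, Fin.sum_univ_two]
      field_simp

end CompleteBipartite

open CompleteBipartite in
/-- For the complete bipartite graph `K_{p,q}` (parts labelled 1 and 2, one-hot
label matrix `Z`), with `Â_rw = (D+I)⁻¹(A+I)` and post-aggregation similarity
matrix `S = (Â_rw Z)(Â_rw Z)ᵀ`: for every node `v` the mean of `S_{v,u}` over
same-label `u` is at least the mean over different-label `u`; hence the
aggregation homophily `H_agg(G) = 1` while the edge homophily `H_edge(G) = 0`. -/
theorem stmt15 (p q : ℕ) (hp : 1 ≤ p) (hq : 1 ≤ q) :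
    let V := Fin p ⊕ Fin q
    let A : Matrix V V ℝ := fun u v => if u.isLeft ≠ v.isLeft then 1 else 0
    let deg : V → ℝ := fun u => if u.isLeft then (q : ℝ) else (p : ℝ)
    let Ahat : Matrix V V ℝ := Matrix.diagonal (fun u => (deg u + 1)⁻¹) * (A + 1)
    let Z : Matrix V (Fin 2) ℝ :=
      fun u j => if (u.isLeft ∧ j = 0) ∨ (¬ u.isLeft ∧ j = 1) then 1 else 0
    let S : Matrix V V ℝ := (Ahat * Z) * (Ahat * Z).transpose
    let sameMean : V → ℝ := fun v =>
      (∑ u ∈ Finset.univ.filter fun u : V => u.isLeft = v.isLeft, S v u) /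
        ((Finset.univ.filter fun u : V => u.isLeft = v.isLeft).card : ℝ)
    let diffMean : V → ℝ := fun v =>
      (∑ u ∈ Finset.univ.filter fun u : V => u.isLeft ≠ v.isLeft, S v u) /
        ((Finset.univ.filter fun u : V => u.isLeft ≠ v.isLeft).card : ℝ)
    (∀ v : V, diffMean v ≤ sameMean v) ∧
      ((Finset.univ.filter fun v : V => diffMean v ≤ sameMean v).card : ℝ) /
          ((p : ℝ) + q) = 1 ∧
      ((Finset.univ.filter fun uv : V × V =>
            uv.1.isLeft ≠ uv.2.isLeft ∧ uv.1.isLeft = uv.2.isLeft).card : ℝ) /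
          ((Finset.univ.filter fun uv : V × V => uv.1.isLeft ≠ uv.2.isLeft).card : ℝ)
        = 0 := by
  intro V A deg Ahat Z S sameMean diffMean
  have hsame (v : V) :
      sameMean v = aggregatedRow p q v.isLeft ⬝ᵥ aggregatedRow p q v.isLeft :=
    mean_similarity_part hp hq v v.isLeft
  have hdiff (v : V) :
      diffMean v = aggregatedRow p q v.isLeft ⬝ᵥ aggregatedRow p q (!v.isLeft) := by
    simp only [diffMean, ← Bool.eq_not]
    exact mean_similarity_part hp hq v _
  have hmean (v : V) : diffMean v ≤ sameMean v := by
    rw [hsame, hdiff]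
    exact aggregatedRow_dotProduct_not_le hp hq _
  refine ⟨hmean, ?_, ?_⟩
  · rw [filter_true_of_mem fun v _ => hmean v, card_univ, Fintype.card_sum, Fintype.card_fin,
      Fintype.card_fin, Nat.cast_add]
    exact div_self (by positivity)
  · rw [filter_false_of_mem fun _ _ h => h.1 h.2]
    simp
end
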